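/- In the LTS of the specification ET ∪ E∞Q, for all d ∈ D□ and δL, δR ∈ D□*: (i) if δL = ζL dL for some dL ∈ D□ and ζL ∈ D□*, then [H^L_d ∥ Q_{δR ⊥ δL}]_{{i,o}} has a deterministic internal computation to [H_{dL} ∥ Q_{d δR ⊥ ζL}]_{{i,o}}, and if δL = ε then [H^L_d ∥ Q_{δR ⊥ δL}]_{{i,o}} has a deterministic internal computation to [H_□ ∥ Q_{d δR ⊥}]_{{i,o}}; (ii) if δR = dR ζR for some dR ∈ D□ and ζR ∈ D□*, then [H^R_d ∥ Q_{δR ⊥ δL}]_{{i,o}} has a deterministic internal computation to [H_{dR} ∥ Q_{ζR ⊥ δL d}]_{{i,o}}, and if δR = ε then [H^R_d ∥ Q_{δR ⊥ δL}]_{{i,o}} has a deterministic internal computation to [H_□ ∥ Q_{⊥ δL d}]_{{i,o}}. -/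

import Mathlib

namespace RTMPaper

/-! ## Labelled transition systems

An `A`-labelled transition system; transition labels are drawn from `Option A`,
where `none` plays the role of the unobservable action τ. -/

structure LTS (A : Type) where
  State : Type
  tr : State → Option A → State → Prop
  init : State
  final : Set State

namespace LTS

variable {A : Type}

/-- A τ-step. -/
def tauStep (T : LTS A) (s t : T.State) : Prop := T.tr s none t

/-- `⇒` : the reflexive–transitive closure of τ-steps. -/
def tauReach (T : LTS A) : T.State → T.State → Prop :=
  Relation.ReflTransGen T.tauStep

/-- `s —(a)→ t` : either `s —a→ t`, or `a = τ` and `s = t`. -/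
def optStep (T : LTS A) (s : T.State) (a : Option A) (t : T.State) : Prop :=
  T.tr s a t ∨ (a = none ∧ s = t)

/-- The set of outgoing transitions of a state. -/
def out (T : LTS A) (s : T.State) : Set (Option A × T.State) :=
  {p | T.tr s p.1 p.2}

def FinitelyBranching (T : LTS A) : Prop := ∀ s, (T.out s).Finite

/-- The branching degree of `T` is bounded by `B`. -/
def BranchingDegreeBoundedBy (T : LTS A) (B : ℕ) : Prop :=
  ∀ s, (T.out s).Finite ∧ (T.out s).ncard ≤ B

def BoundedlyBranching (T : LTS A) : Prop := ∃ B, T.BranchingDegreeBoundedBy B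

/-- A deterministic transition system. -/
def Deterministic (T : LTS A) : Prop :=
  (∀ s a t₁ t₂, T.tr s a t₁ → T.tr s a t₂ → t₁ = t₂) ∧
  (∀ s t, T.tr s none t → ∀ a u, T.tr s a u → a = none)

/-- Relabelling of an LTS along a map of action alphabets (τ is mapped to τ). -/
def relabel {A' : Type} (f : A → A') (T : LTS A) : LTS A' where
  State := T.State
  tr s a t := ∃ a₀ : Option A, T.tr s a₀ t ∧ a = Option.map f a₀
  init := T.init
  final := T.final

end LTS

/-! ## (Divergence-preserving) branching bisimilarity -/

structure IsBranchingBisimulation {A : Type} (T₁ T₂ : LTS A)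
    (R : T₁.State → T₂.State → Prop) : Prop where
  fwd : ∀ s₁ s₂ a s₁', R s₁ s₂ → T₁.tr s₁ a s₁' →
    ∃ s₂'' s₂', T₂.tauReach s₂ s₂'' ∧ T₂.optStep s₂'' a s₂' ∧ R s₁ s₂'' ∧ R s₁' s₂'
  bwd : ∀ s₁ s₂ a s₂', R s₁ s₂ → T₂.tr s₂ a s₂' →
    ∃ s₁'' s₁', T₁.tauReach s₁ s₁'' ∧ T₁.optStep s₁'' a s₁' ∧ R s₁'' s₂ ∧ R s₁' s₂'
  finFwd : ∀ s₁ s₂, R s₁ s₂ → s₁ ∈ T₁.final →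
    ∃ s₂', T₂.tauReach s₂ s₂' ∧ R s₁ s₂' ∧ s₂' ∈ T₂.final
  finBwd : ∀ s₁ s₂, R s₁ s₂ → s₂ ∈ T₂.final →
    ∃ s₁', T₁.tauReach s₁ s₁' ∧ R s₁' s₂ ∧ s₁' ∈ T₁.final

/-- The divergence-preservation conditions on a branching bisimulation. -/
def DivergencePreserving {A : Type} (T₁ T₂ : LTS A)
    (R : T₁.State → T₂.State → Prop) : Prop :=
  (∀ (s₂ : T₂.State) (f : ℕ → T₁.State),
      (∀ i, T₁.tauStep (f i) (f (i + 1))) → (∀ i, R (f i) s₂) →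
      ∃ s₂', Relation.TransGen T₂.tauStep s₂ s₂' ∧ ∃ i, R (f i) s₂') ∧
  (∀ (s₁ : T₁.State) (f : ℕ → T₂.State),
      (∀ i, T₂.tauStep (f i) (f (i + 1))) → (∀ i, R s₁ (f i)) →
      ∃ s₁', Relation.TransGen T₁.tauStep s₁ s₁' ∧ ∃ i, R s₁' (f i))

/-- `T₁ ≈b T₂` : branching bisimilarity. -/
def BranchingBisimilar {A : Type} (T₁ T₂ : LTS A) : Prop :=
  ∃ R, IsBranchingBisimulation T₁ T₂ R ∧ R T₁.init T₂.init

/-- `T₁ ≈Δb T₂` : divergence-preserving branching bisimilarity. -/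
def DPBranchingBisimilar {A : Type} (T₁ T₂ : LTS A) : Prop :=
  ∃ R, IsBranchingBisimulation T₁ T₂ R ∧ DivergencePreserving T₁ T₂ R ∧
    R T₁.init T₂.init

/-! ## Effective and computable transition systems -/

/-- A set of natural numbers is recursively enumerable. -/
def REset (X : Set ℕ) : Prop :=
  ∃ f : ℕ →. Unit, Partrec f ∧ ∀ n, (f n).Dom ↔ n ∈ X

/-- A (finitely branching) LTS is computable if, with respect to some injective
codings of its labels and states into ℕ, the functions `out` and `fin` are
recursive. -/
def LTS.IsComputable {A : Type} (T : LTS A) : Prop :=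
  ∃ hfb : ∀ s, (T.out s).Finite,
    ∃ (cL : Option A → ℕ) (cS : T.State → ℕ),
      Function.Injective cL ∧ Function.Injective cS ∧
      (∃ fo : ℕ → ℕ, Computable fo ∧ ∀ s,
        fo (cS s) =
          Encodable.encode
            (((hfb s).toFinset).image fun p => Nat.pair (cL p.1) (cS p.2))) ∧
      (∃ ff : ℕ → ℕ, Computable ff ∧ ∀ s,
        (s ∈ T.final → ff (cS s) = 1) ∧ (s ∉ T.final → ff (cS s) = 0))

/-- A (finitely branching) LTS is effective if, with respect to some injective
codings of its labels and states into ℕ, its transition relation and its set of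
final states are recursively enumerable. -/
def LTS.IsEffective {A : Type} (T : LTS A) : Prop :=
  T.FinitelyBranching ∧
  ∃ (cL : Option A → ℕ) (cS : T.State → ℕ),
    Function.Injective cL ∧ Function.Injective cS ∧
    REset {n | ∃ s a t, T.tr s a t ∧ n = Nat.pair (cS s) (Nat.pair (cL a) (cS t))} ∧
    REset {n | ∃ s ∈ T.final, n = cS s}

/-! ## Reactive Turing machines -/

inductive Move : Type
  | L | R
deriving DecidableEq

instance : Fintype Move where
  elems := {Move.L, Move.R}
  complete := by intro x; cases x <;> simp

/-- A tape instance: the content left of the head (nearest symbol first), the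
symbol under the head, and the content right of the head (nearest symbol
first).  Tape symbols are `Option D`, with `none` the blank symbol □. -/
structure Tape (D : Type) where
  left : List (Option D)
  head : Option D
  right : List (Option D)

def Tape.empty (D : Type) : Tape D := ⟨[], none, []⟩

/-- Write `e` at the head position and move the head in direction `m`. -/
def Tape.writeMove {D : Type} (t : Tape D) (e : Option D) : Move → Tape D
  | .L =>
    match t.left with
    | [] => ⟨[], none, e :: t.right⟩
    | x :: l => ⟨l, x, e :: t.right⟩
  | .R =>
    match t.right with
    | [] => ⟨e :: t.left, none, []⟩
    | x :: r => ⟨e :: t.left, x, r⟩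

/-- A reactive Turing machine with action symbols `A` (labels `Option A`,
`none` being τ) and data symbols `D` (tape symbols `Option D`, `none` being
the blank symbol). -/
structure RTM (A D : Type) where
  Q : Type
  [instQ : Fintype Q]
  trans : Q → Option D → Option A → Option D → Move → Q → Prop
  init : Q
  final : Set Q

attribute [instance] RTM.instQ

/-- The transition system `T(M)` associated with an RTM `M`. -/
def RTM.lts {A D : Type} (M : RTM A D) : LTS A where
  State := M.Q × Tape D
  tr c a c' := ∃ e m, M.trans c.1 c.2.head a e m c'.1 ∧ c'.2 = c.2.writeMove e m
  init := (M.init, Tape.empty D)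
  final := {c | c.1 ∈ M.final}

def RTM.Deterministic {A D : Type} (M : RTM A D) : Prop :=
  (∀ s d a e₁ m₁ t₁ e₂ m₂ t₂, M.trans s d a e₁ m₁ t₁ → M.trans s d a e₂ m₂ t₂ →
      e₁ = e₂ ∧ m₁ = m₂ ∧ t₁ = t₂) ∧
  (∀ s d e₁ m₁ t₁, M.trans s d none e₁ m₁ t₁ →
      ∀ a e₂ m₂ t₂, M.trans s d a e₂ m₂ t₂ → a = none)

/-! ## Actions over channels, and parallel composition -/

/-- Actions over a set `C` of channels with communicated values in `V`,
together with further (base) actions from `B`:  `recv c v` is `c?v`,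
`send c v` is `c!v`. -/
inductive CAct (C V B : Type) : Type
  | recv : C → V → CAct C V B
  | send : C → V → CAct C V B
  | base : B → CAct C V B
deriving DecidableEq

/-- The (possibly silent) action `a` is a communication action on one of the
channels in `C'`. -/
def IsComm {C V B : Type} (C' : Set C) : Option (CAct C V B) → Prop
  | some (.recv c _) => c ∈ C'
  | some (.send c _) => c ∈ C'
  | _ => False

/-- Parallel composition `[T₁ ∥ T₂]_{C'}` of transition systems, enforcing
communication on the channels in `C'`. -/
def parLTS {C V B : Type} (C' : Set C) (T₁ T₂ : LTS (CAct C V B)) :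
    LTS (CAct C V B) where
  State := T₁.State × T₂.State
  init := (T₁.init, T₂.init)
  final := {p | p.1 ∈ T₁.final ∧ p.2 ∈ T₂.final}
  tr p a p' :=
    ¬ IsComm C' a ∧
    ((T₁.tr p.1 a p'.1 ∧ p.2 = p'.2) ∨
     (T₂.tr p.2 a p'.2 ∧ p.1 = p'.1) ∨
     (a = none ∧ ∃ c ∈ C', ∃ d : V,
        (T₁.tr p.1 (some (.send c d)) p'.1 ∧ T₂.tr p.2 (some (.recv c d)) p'.2) ∨
        (T₁.tr p.1 (some (.recv c d)) p'.1 ∧ T₂.tr p.2 (some (.send c d)) p'.2)))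

/-- The behaviour of `sender(M)`: output the symbols of `w` one by one along
channel `cu`, then halt in a final state. -/
def outputLTS {C V B : Type} (cu : C) (w : List V) : LTS (CAct C V B) where
  State := List V
  tr s a t := ∃ d, s = d :: t ∧ a = some (.send cu d)
  init := w
  final := {([] : List V)}

/-- A concrete (syntactic, Gödel-numberable) presentation of a reactive Turing
machine: states are `Fin (n+1)`, and the transition relation is a finite set of
tuples. -/
structure RTMc (A D : Type) where
  n : ℕ
  trans : Finset (Fin (n + 1) × Option D × Option A × Option D × Move × Fin (n + 1))
  init : Fin (n + 1)
  final : Finset (Fin (n + 1))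

def RTMc.toRTM {A D : Type} (M : RTMc A D) : RTM A D where
  Q := Fin (M.n + 1)
  trans s d a e m t := (s, d, a, e, m, t) ∈ M.trans
  init := M.init
  final := (↑M.final : Set (Fin (M.n + 1)))

end RTMPaper

namespace RTMPaper

/-! ## A process calculus (TCP_τ without sequential composition) -/

/-- Process expressions: deadlock `0`, skip `1`, action prefix, alternative
composition, parallel composition (enforcing communication on a set of
channels), and names. -/
inductive PExp (C V B N : Type) : Type
  | dl : PExp C V B N
  | emp : PExp C V B N
  | pref : Option (CAct C V B) → PExp C V B N → PExp C V B N
  | alt : PExp C V B N → PExp C V B N → PExp C V B N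
  | par : Set C → PExp C V B N → PExp C V B N → PExp C V B N
  | name : N → PExp C V B N

namespace PExp

def names {C V B N : Type} : PExp C V B N → Set N
  | .dl => ∅
  | .emp => ∅
  | .pref _ p => p.names
  | .alt p q => p.names ∪ q.names
  | .par _ p q => p.names ∪ q.names
  | .name n => {n}

def mapNames {C V B N N' : Type} (f : N → N') : PExp C V B N → PExp C V B N'
  | .dl => .dl
  | .emp => .emp
  | .pref a p => .pref a (p.mapNames f)
  | .alt p q => .alt (p.mapNames f) (q.mapNames f)
  | .par C' p q => .par C' (p.mapNames f) (q.mapNames f)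
  | .name n => .name (f n)

end PExp

/-- A recursive specification over the names `N` is a partial map from names to
process expressions (the defining equations). -/
def SpecWF {C V B N : Type} (E : N → Option (PExp C V B N)) : Prop :=
  ∀ n p, E n = some p → ∀ m ∈ PExp.names p, (E m).isSome

/-- All names occurring in `p` have a defining equation in `E`. -/
def DefinedIn {C V B N : Type} (E : N → Option (PExp C V B N))
    (p : PExp C V B N) : Prop :=
  ∀ m ∈ PExp.names p, (E m).isSome

/-- The termination predicate `↓` of the structural operational semantics. -/
inductive Term {C V B N : Type} (E : N → Option (PExp C V B N)) :
    PExp C V B N → Prop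
  | emp : Term E .emp
  | altL {p q} : Term E p → Term E (.alt p q)
  | altR {p q} : Term E q → Term E (.alt p q)
  | par {C' p q} : Term E p → Term E q → Term E (.par C' p q)
  | name {n p} : E n = some p → Term E p → Term E (.name n)

/-- The transition relation of the structural operational semantics. -/
inductive Step {C V B N : Type} (E : N → Option (PExp C V B N)) :
    PExp C V B N → Option (CAct C V B) → PExp C V B N → Prop
  | pref {a p} : Step E (.pref a p) a p
  | altL {p q a p'} : Step E p a p' → Step E (.alt p q) a p'
  | altR {p q a q'} : Step E q a q' → Step E (.alt p q) a q'
  | parL {C' p q a p'} : Step E p a p' → ¬ IsComm C' a →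
      Step E (.par C' p q) a (.par C' p' q)
  | parR {C' p q a q'} : Step E q a q' → ¬ IsComm C' a →
      Step E (.par C' p q) a (.par C' p q')
  | syncSR {C' : Set C} {p q p' q' c d} : c ∈ C' →
      Step E p (some (.send c d)) p' → Step E q (some (.recv c d)) q' →
      Step E (.par C' p q) none (.par C' p' q')
  | syncRS {C' : Set C} {p q p' q' c d} : c ∈ C' →
      Step E p (some (.recv c d)) p' → Step E q (some (.send c d)) q' →
      Step E (.par C' p q) none (.par C' p' q')
  | name {n p a p'} : E n = some p → Step E p a p' → Step E (.name n) a p'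

/-- The process expressions reachable from `p` under the semantics of `E`. -/
def Reach {C V B N : Type} (E : N → Option (PExp C V B N))
    (p : PExp C V B N) : Set (PExp C V B N) :=
  {q | Relation.ReflTransGen (fun x y => ∃ a, Step E x a y) p q}

/-- The transition system `T_E(p)` associated with the process expression `p`
and the recursive specification `E`. -/
def pLTS {C V B N : Type} (E : N → Option (PExp C V B N))
    (p : PExp C V B N) : LTS (CAct C V B) where
  State := {q // q ∈ Reach E p}
  tr s a t := Step E s.1 a t.1
  init := ⟨p, Relation.ReflTransGen.refl⟩
  final := {s | Term E s.1}

/-- A deterministic internal computation from `s` to `s'` with respect to a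
transition relation `tr`. -/
def DetInternalComp {S A : Type} (tr : S → Option A → S → Prop)
    (s s' : S) : Prop :=
  ∃ (n : ℕ) (f : ℕ → S), f 0 = s ∧ f n = s' ∧
    (∀ i < n, tr (f i) none (f (i + 1))) ∧
    (∀ i < n, ∀ a u, tr (f i) a u → a = none ∧ u = f (i + 1))

/-! ### Finite sums of process expressions -/

def bigAlt {C V B N : Type} (l : List (PExp C V B N)) : PExp C V B N :=
  l.foldr PExp.alt PExp.dl

/-- `Σ_{x ∈ l} f x`. -/
def sumList {C V B N ι : Type} (l : List ι) (f : ι → PExp C V B N) :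
    PExp C V B N :=
  bigAlt (l.map f)

/-- The list of all elements of a finite type. -/
noncomputable def allOf (ι : Type) [Fintype ι] : List ι := Finset.univ.toList

/-- The disjoint union of two recursive specifications. -/
def combineSpec {C V B N₁ N₂ : Type}
    (E₁ : N₁ → Option (PExp C V B N₁)) (E₂ : N₂ → Option (PExp C V B N₂)) :
    N₁ ⊕ N₂ → Option (PExp C V B (N₁ ⊕ N₂))
  | .inl n => (E₁ n).map (PExp.mapNames Sum.inl)
  | .inr n => (E₂ n).map (PExp.mapNames Sum.inr)

/-! ### Queue specifications -/

/-- The infinite specification `E∞Q` of a FIFO queue over the alphabet `al`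
with input channel `ci` and output channel `co`; the name of a state of the
queue is its contents (a string, insertion at the left, removal at the
right). -/
def infQueueSpec (C B V : Type) (al : List V) (ci co : C) :
    List V → Option (PExp C V B (List V)) := fun l =>
  some <|
    match l.getLast? with
    | none =>
        .alt (sumList al fun d => .pref (some (.recv ci d)) (.name [d])) .emp
    | some d =>
        .alt (.alt (.pref (some (.send co d)) (.name l.dropLast))
          (sumList al fun e => .pref (some (.recv ci e)) (.name (e :: l)))) .emp

/-- The finite Bergstra–Klop queue specification `EQ` (with added `1`-summands):
for channels `(j,k,p)`,
`Q^{jk}_p ≝ Σ_d j?d.[ Q^{jp}_k ∥ (1 + k!d.Q^{pk}_j) ]_{{p}} + 1`. -/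
def bkQueueSpec (C B V : Type) (al : List V) :
    C × C × C → Option (PExp C V B (C × C × C)) := fun jkp =>
  some <| .alt
    (sumList al fun d => .pref (some (.recv jkp.1 d))
      (.par {jkp.2.2} (.name (jkp.1, jkp.2.2, jkp.2.1))
        (.alt .emp (.pref (some (.send jkp.2.1 d)) (.name (jkp.2.2, jkp.2.1, jkp.1))))))
    .emp

/-! ### Tape specifications -/

/-- Symbols communicated in the tape/queue specifications: tape symbols
(`dat d` for `d ∈ D□`), the fresh symbols `⊥` and `$`, and the move
instructions `L` and `R`. -/
inductive Sym (D : Type) : Type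
  | dat : Option D → Sym D
  | bot : Sym D
  | dollar : Sym D
  | mvL : Sym D
  | mvR : Sym D
deriving DecidableEq

instance {D : Type} [Fintype D] [DecidableEq D] : Fintype (Sym D) where
  elems := ((Finset.univ : Finset (Option D)).image Sym.dat) ∪
    {Sym.bot, Sym.dollar, Sym.mvL, Sym.mvR}
  complete := by intro x; cases x <;> simp

/-- The queue alphabet `D□ ∪ {⊥, $}`. -/
noncomputable def qAlphList (D : Type) [Fintype D] [DecidableEq D] : List (Sym D) :=
  ((Finset.univ : Finset (Sym D)).filter fun v => v ≠ Sym.mvL ∧ v ≠ Sym.mvR).toList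

def dmap {D : Type} (l : List (Option D)) : List (Sym D) := l.map Sym.dat

def movSym {D : Type} : Move → Sym D
  | .L => .mvL
  | .R => .mvR

/-- Names of the finite tape-controller specification `ET`. -/
inductive TName (D : Type) : Type
  | H : Option D → TName D
  | HL : Option D → TName D
  | HR : Option D → TName D
  | Back : TName D
  | Fwd : Option D → TName D
  | FwdBot : TName D

/-- The finite tape-controller specification `ET`, with read channel `cr`,
write channel `cw`, move channel `cm`, and a queue interface on channels
`ci` (insert) and `co` (remove). -/
noncomputable def tapeCtrlSpec (C D B : Type) [Fintype D] (ci co cr cw cm : C) :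
    TName D → Option (PExp C (Sym D) B (TName D))
  | .H d => some <| .alt (.alt (.alt (.alt
      (.pref (some (.send cr (.dat d))) (.name (.H d)))
      (sumList (allOf (Option D)) fun e =>
        .pref (some (.recv cw (.dat e))) (.name (.H e))))
      (.pref (some (.recv cm .mvL)) (.name (.HL d))))
      (.pref (some (.recv cm .mvR)) (.name (.HR d))))
      .emp
  | .HL d => some <| .pref (some (.send ci (.dat d)))
      (.alt (sumList (allOf (Option D)) fun e =>
          .pref (some (.recv co (.dat e))) (.name (.H e)))
        (.pref (some (.recv co .bot))
          (.pref (some (.send ci .dollar))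
            (.pref (some (.send ci .bot)) (.name .Back)))))
  | .Back => some <| .alt
      (sumList (allOf (Option D)) fun d =>
        .pref (some (.recv co (.dat d)))
          (.pref (some (.send ci (.dat d))) (.name .Back)))
      (.pref (some (.recv co .dollar)) (.name (.H none)))
  | .HR d => some <| .pref (some (.send ci .dollar))
      (.pref (some (.send ci (.dat d)))
        (.alt (sumList (allOf (Option D)) fun e =>
            .pref (some (.recv co (.dat e))) (.name (.Fwd e)))
          (.pref (some (.recv co .bot)) (.name .FwdBot))))
  | .Fwd d => some <| .alt (.alt
      (sumList (allOf (Option D)) fun e =>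
        .pref (some (.recv co (.dat e)))
          (.pref (some (.send ci (.dat d))) (.name (.Fwd e))))
      (.pref (some (.recv co .bot))
        (.pref (some (.send ci (.dat d))) (.name .FwdBot))))
      (.pref (some (.recv co .dollar)) (.name (.H d)))
  | .FwdBot => some <| .alt
      (sumList (allOf (Option D)) fun e =>
        .pref (some (.recv co (.dat e)))
          (.pref (some (.send ci .bot)) (.name (.Fwd e))))
      (.pref (some (.recv co .dollar))
        (.pref (some (.send ci .bot)) (.name (.H none))))

/-- The infinite tape specification `E∞T`: one name for every tape instance,
with read channel `cr`, write channel `cw` and move channel `cm`. -/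
noncomputable def infTapeSpec (C B D : Type) [Fintype D] (cr cw cm : C) :
    Tape D → Option (PExp C (Sym D) B (Tape D)) := fun t =>
  some <| .alt (.alt (.alt (.alt
    (.pref (some (.send cr (.dat t.head))) (.name t))
    (sumList (allOf (Option D)) fun e =>
      .pref (some (.recv cw (.dat e))) (.name ⟨t.left, e, t.right⟩)))
    (.pref (some (.recv cm .mvL)) (.name (t.writeMove t.head .L))))
    (.pref (some (.recv cm .mvR)) (.name (t.writeMove t.head .R))))
    .emp

/-- The finite-control specification `Efc` of an RTM `M`:
`C_{s,d} ≝ Σ_{(s,d,a,e,Mv,t) ∈ →} a.w!e.m!Mv.Σ_{f∈D□} r?f.C_{t,f}`,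
with an additional summand `1` iff `s` is a final state of `M`. -/
noncomputable def fcSpec {C D B : Type} [Fintype D] [Fintype B]
    (M : RTM B D) (cr cw cm : C) :
    M.Q × Option D → Option (PExp C (Sym D) B (M.Q × Option D)) := fun sd =>
  let base : PExp C (Sym D) B (M.Q × Option D) :=
    bigAlt ((((Set.toFinite {x : Option B × Option D × Move × M.Q |
        M.trans sd.1 sd.2 x.1 x.2.1 x.2.2.1 x.2.2.2}).toFinset).toList).map fun x =>
      .pref (Option.map CAct.base x.1)
        (.pref (some (.send cw (.dat x.2.1)))
          (.pref (some (.send cm (movSym x.2.2.1)))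
            (sumList (allOf (Option D)) fun f =>
              .pref (some (.recv cr (.dat f))) (.name (x.2.2.2, f))))))
  haveI := Classical.propDecidable (sd.1 ∈ M.final)
  some (if sd.1 ∈ M.final then .alt base .emp else base)

end RTMPaper

namespace RTMPaper

/-- The tape-controller specification combined with the infinite queue
specification (over the queue alphabet `D□ ∪ {⊥, $}`). -/
noncomputable def EdTQ (C D B : Type) [Fintype D] [DecidableEq D]
    (ci co cr cw cm : C) :
    (TName D ⊕ List (Sym D)) →
      Option (PExp C (Sym D) B (TName D ⊕ List (Sym D))) :=
  combineSpec (tapeCtrlSpec C D B ci co cr cw cm)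
    (infQueueSpec C B (Sym D) (qAlphList D) ci co)

/-! In `[p ∥ Q_σ]_{i,o}` the controller `p` either only sends on `i`, which the queue always
accepts, or only receives on `o`, where the queue offers nothing but its last symbol. Since all
actions of both sides are on the restricted channels, the composite then has exactly one
transition, a τ-step, so each head move is a deterministic internal computation and it only
remains to trace it: `Back` copies a block of the queue round once, and `Fwd` rotates a block
by one symbol, holding that symbol in its index as a one-place buffer. -/

section Semantics

variable {C V B N : Type} {E : N → Option (PExp C V B N)}

theorem step_pref_iff {a b : Option (CAct C V B)} {p q : PExp C V B N} :
    Step E (.pref a p) b q ↔ b = a ∧ q = p := by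
  constructor
  · rintro ⟨⟩
    exact ⟨rfl, rfl⟩
  · rintro ⟨rfl, rfl⟩
    exact .pref

theorem step_alt_iff {p q r : PExp C V B N} {a : Option (CAct C V B)} :
    Step E (.alt p q) a r ↔ Step E p a r ∨ Step E q a r := by
  constructor
  · intro h
    cases h with
    | altL h => exact .inl h
    | altR h => exact .inr h
  · rintro (h | h)
    · exact .altL h
    · exact .altR h

@[simp]
theorem not_step_dl {a : Option (CAct C V B)} {q : PExp C V B N} : ¬ Step E .dl a q := nofun

@[simp]
theorem not_step_emp {a : Option (CAct C V B)} {q : PExp C V B N} : ¬ Step E .emp a q := nofun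

theorem step_name_iff {n : N} {a : Option (CAct C V B)} {q : PExp C V B N} :
    Step E (.name n) a q ↔ ∃ p, E n = some p ∧ Step E p a q := by
  constructor
  · intro h
    cases h with
    | name hE hs => exact ⟨_, hE, hs⟩
  · rintro ⟨p, hE, hs⟩
    exact .name hE hs

theorem step_par_iff {C' : Set C} {p q r : PExp C V B N} {a : Option (CAct C V B)} :
    Step E (.par C' p q) a r ↔
      (∃ p', Step E p a p' ∧ ¬ IsComm C' a ∧ r = .par C' p' q) ∨
      (∃ q', Step E q a q' ∧ ¬ IsComm C' a ∧ r = .par C' p q') ∨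
      (∃ c ∈ C', ∃ v p' q', a = none ∧ r = .par C' p' q' ∧
        ((Step E p (some (.send c v)) p' ∧ Step E q (some (.recv c v)) q') ∨
         (Step E p (some (.recv c v)) p' ∧ Step E q (some (.send c v)) q'))) := by
  constructor
  · intro h
    cases h with
    | parL h hc => exact .inl ⟨_, h, hc, rfl⟩
    | parR h hc => exact .inr (.inl ⟨_, h, hc, rfl⟩)
    | syncSR hc h₁ h₂ => exact .inr (.inr ⟨_, hc, _, _, _, rfl, rfl, .inl ⟨h₁, h₂⟩⟩)
    | syncRS hc h₁ h₂ => exact .inr (.inr ⟨_, hc, _, _, _, rfl, rfl, .inr ⟨h₁, h₂⟩⟩)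
  · rintro (⟨p', h, hc, rfl⟩ | ⟨q', h, hc, rfl⟩ |
      ⟨c, hc, v, p', q', rfl, rfl, ⟨h₁, h₂⟩ | ⟨h₁, h₂⟩⟩)
    · exact .parL h hc
    · exact .parR h hc
    · exact .syncSR hc h₁ h₂
    · exact .syncRS hc h₁ h₂

theorem step_bigAlt_iff {L : List (PExp C V B N)} {a : Option (CAct C V B)}
    {q : PExp C V B N} : Step E (bigAlt L) a q ↔ ∃ p ∈ L, Step E p a q := by
  induction L with
  | nil => simp [bigAlt]
  | cons x L ih => simp [bigAlt, step_alt_iff, ← ih]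

theorem step_sumList_iff {ι : Type} {l : List ι} {f : ι → PExp C V B N}
    {a : Option (CAct C V B)} {q : PExp C V B N} :
    Step E (sumList l f) a q ↔ ∃ x ∈ l, Step E (f x) a q := by
  simp [sumList, step_bigAlt_iff]

theorem mapNames_sumList {N' ι : Type} (g : N → N') (l : List ι) (f : ι → PExp C V B N) :
    (sumList l f).mapNames g = sumList l (fun x => (f x).mapNames g) := by
  unfold sumList bigAlt
  induction l with
  | nil => rfl
  | cons x l ih => simp only [List.map_cons, List.foldr_cons, PExp.mapNames, ih]

@[simp]
theorem mem_allOf {ι : Type} [Fintype ι] (x : ι) : x ∈ allOf ι := by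
  simp [allOf]

end Semantics

section DeterministicComputation

variable {S A : Type} {tr : S → Option A → S → Prop}

def UniqueTauStep (tr : S → Option A → S → Prop) (s t : S) : Prop :=
  tr s none t ∧ ∀ a u, tr s a u → a = none ∧ u = t

theorem DetInternalComp.refl (s : S) : DetInternalComp tr s s :=
  ⟨0, fun _ => s, rfl, rfl, nofun, nofun⟩

theorem DetInternalComp.head {s t u : S} (hst : UniqueTauStep tr s t)
    (htu : DetInternalComp tr t u) : DetInternalComp tr s u := by
  obtain ⟨n, f, rfl, rfl, hstep, hdet⟩ := htu
  refine ⟨n + 1, fun i => Nat.casesOn i s f, rfl, rfl, ?_, ?_⟩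
  · rintro (_ | i) hi
    · exact hst.1
    · exact hstep i (by omega)
  · rintro (_ | i) hi
    · exact hst.2
    · exact hdet i (by omega)

theorem DetInternalComp.of_reflTransGen {s t : S}
    (h : Relation.ReflTransGen (UniqueTauStep tr) s t) : DetInternalComp tr s t :=
  h.head_induction_on (.refl t) fun hst _ ih => ih.head hst

end DeterministicComputation

section Queue

variable {C V B N : Type} {E₁ : N → Option (PExp C V B N)} {al : List V} {ci co : C}

def withQueue (ci co : C) (p : PExp C V B (N ⊕ List V)) (l : List V) :
    PExp C V B (N ⊕ List V) :=
  .par {ci, co} p (.name (.inr l))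

def IsInputChoice (E : N → Option (PExp C V B N)) (c : C) (p : PExp C V B N)
    (κ : V → Option (PExp C V B N)) : Prop :=
  ∀ a q, Step E p a q ↔ ∃ w, a = some (.recv c w) ∧ κ w = some q

local notation "EQ" => combineSpec E₁ (infQueueSpec C B V al ci co)

theorem step_queue_iff {l : List V} {a : Option (CAct C V B)}
    {q : PExp C V B (N ⊕ List V)} :
    Step EQ (.name (.inr l)) a q ↔
      (∃ v ∈ al, a = some (.recv ci v) ∧ q = .name (.inr (v :: l))) ∨
      (∃ l' x, l = l' ++ [x] ∧ a = some (.send co x) ∧ q = .name (.inr l')) := by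
  rcases List.eq_nil_or_concat' l with rfl | ⟨l', x, rfl⟩
  · simp [step_name_iff, combineSpec, infQueueSpec, PExp.mapNames, mapNames_sumList,
      step_alt_iff, step_sumList_iff, step_pref_iff]
  · simp [step_name_iff, combineSpec, infQueueSpec, PExp.mapNames, mapNames_sumList,
      step_alt_iff, step_sumList_iff, step_pref_iff, or_comm]

theorem uniqueTauStep_send {p p' : PExp C V B (N ⊕ List V)} {v : V} {l : List V}
    (hv : v ∈ al) (hp : ∀ a q, Step EQ p a q ↔ a = some (.send ci v) ∧ q = p') :
    UniqueTauStep (Step EQ) (withQueue ci co p l) (withQueue ci co p' (v :: l)) := by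
  refine ⟨.syncSR (by simp) ((hp _ _).2 ⟨rfl, rfl⟩)
    (step_queue_iff.2 (.inl ⟨v, hv, rfl, rfl⟩)), fun a u hu => ?_⟩
  rcases step_par_iff.1 hu with ⟨_, h, hc, -⟩ | ⟨_, h, hc, -⟩ | ⟨c, -, w, _, _, rfl, rfl, h⟩
  · obtain ⟨rfl, -⟩ := (hp _ _).1 h
    simp [IsComm] at hc
  · rcases step_queue_iff.1 h with ⟨_, -, rfl, -⟩ | ⟨_, _, -, rfl, -⟩ <;> simp [IsComm] at hc
  · rcases h with ⟨h₁, h₂⟩ | ⟨h₁, -⟩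
    · obtain ⟨heq, rfl⟩ := (hp _ _).1 h₁
      obtain ⟨rfl, rfl⟩ : c = ci ∧ w = v := by simpa using heq
      rcases step_queue_iff.1 h₂ with ⟨_, -, heq, rfl⟩ | ⟨_, _, -, heq, -⟩
      · obtain rfl := by simpa using heq
        exact ⟨rfl, rfl⟩
      · simp at heq
    · simpa using ((hp _ _).1 h₁).1

theorem uniqueTauStep_send_pref {p : PExp C V B (N ⊕ List V)} {v : V} {l : List V}
    (hv : v ∈ al) :
    UniqueTauStep (Step EQ) (withQueue ci co (.pref (some (.send ci v)) p) l)
      (withQueue ci co p (v :: l)) :=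
  uniqueTauStep_send hv fun _ _ => step_pref_iff

theorem uniqueTauStep_recv {p p' : PExp C V B (N ⊕ List V)} {κ : V → Option _} {x : V}
    {l : List V} (hp : IsInputChoice EQ co p κ) (hx : κ x = some p') :
    UniqueTauStep (Step EQ) (withQueue ci co p (l ++ [x])) (withQueue ci co p' l) := by
  refine ⟨.syncRS (by simp) ((hp _ _).2 ⟨x, rfl, hx⟩)
    (step_queue_iff.2 (.inr ⟨l, x, rfl, rfl, rfl⟩)), fun a u hu => ?_⟩
  rcases step_par_iff.1 hu with ⟨_, h, hc, -⟩ | ⟨_, h, hc, -⟩ | ⟨c, -, w, _, _, rfl, rfl, h⟩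
  · obtain ⟨_, rfl, -⟩ := (hp _ _).1 h
    simp [IsComm] at hc
  · rcases step_queue_iff.1 h with ⟨_, -, rfl, -⟩ | ⟨_, _, -, rfl, -⟩ <;> simp [IsComm] at hc
  · rcases h with ⟨h₁, -⟩ | ⟨h₁, h₂⟩
    · obtain ⟨_, heq, -⟩ := (hp _ _).1 h₁
      simp at heq
    · rcases step_queue_iff.1 h₂ with ⟨_, -, heq, -⟩ | ⟨l', y, hl, heq, rfl⟩
      · simp at heq
      · obtain ⟨rfl, rfl⟩ : l' = l ∧ y = x := by simpa [eq_comm] using hl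
        obtain ⟨rfl, rfl⟩ : c = co ∧ w = y := by simpa using heq
        obtain ⟨_, heq, hκ⟩ := (hp _ _).1 h₁
        obtain rfl := by simpa using heq
        obtain rfl := Option.some_inj.1 (hκ.symm.trans hx)
        exact ⟨rfl, rfl⟩

end Queue

section TapeController

variable {C D B : Type} [Fintype D] [DecidableEq D] {ci co cr cw cm : C}

local notation "TQ" => PExp C (Sym D) B (TName D ⊕ List (Sym D))
local notation "EE" => EdTQ C D B ci co cr cw cm
local notation "⟪" p ", " l "⟫" => withQueue ci co p l
local infix:50 " ⟶* " => Relation.ReflTransGen (UniqueTauStep (Step EE))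

abbrev ctl (t : TName D) : TQ := .name (.inl t)

/-- `H^L_d` after `i!d`. -/
noncomputable def hlRead (ci co : C) : TQ :=
  .alt (sumList (allOf (Option D)) fun e => .pref (some (.recv co (.dat e))) (ctl (.H e)))
    (.pref (some (.recv co .bot))
      (.pref (some (.send ci .dollar)) (.pref (some (.send ci .bot)) (ctl .Back))))

/-- `H^R_d` after `i!$.i!d`. -/
noncomputable def hrRead (co : C) : TQ :=
  .alt (sumList (allOf (Option D)) fun e => .pref (some (.recv co (.dat e))) (ctl (.Fwd e)))
    (.pref (some (.recv co .bot)) (ctl .FwdBot))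

theorem step_ctl_iff {t : TName D} {a : Option (CAct C (Sym D) B)} {q : TQ} :
    Step EE (ctl t) a q ↔ ∃ p, (tapeCtrlSpec C D B ci co cr cw cm t).map
      (PExp.mapNames Sum.inl) = some p ∧ Step EE p a q :=
  step_name_iff

theorem step_hl_iff {d : Option D} {a : Option (CAct C (Sym D) B)} {q : TQ} :
    Step EE (ctl (.HL d)) a q ↔ a = some (.send ci (.dat d)) ∧ q = hlRead ci co := by
  simp [step_ctl_iff, tapeCtrlSpec, PExp.mapNames, mapNames_sumList, step_pref_iff, hlRead]

theorem step_hr_iff {d : Option D} {a : Option (CAct C (Sym D) B)} {q : TQ} :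
    Step EE (ctl (.HR d)) a q ↔
      a = some (.send ci .dollar) ∧ q = .pref (some (.send ci (.dat d))) (hrRead co) := by
  simp [step_ctl_iff, tapeCtrlSpec, PExp.mapNames, mapNames_sumList, step_pref_iff, hrRead]

theorem isInputChoice_hlRead : IsInputChoice EE co (hlRead ci co) fun
    | .dat e => some (ctl (.H e))
    | .bot => some (.pref (some (.send ci .dollar)) (.pref (some (.send ci .bot)) (ctl .Back)))
    | _ => none := by
  intro a q
  simp only [hlRead, step_alt_iff, step_sumList_iff, step_pref_iff, mem_allOf, true_and]
  constructor
  · rintro (⟨e, rfl, rfl⟩ | ⟨rfl, rfl⟩) <;> exact ⟨_, rfl, rfl⟩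
  · rintro ⟨_ | _ | _ | _ | _, rfl, ⟨⟩⟩ <;> simp

theorem isInputChoice_hrRead : IsInputChoice EE co (hrRead co) fun
    | .dat e => some (ctl (.Fwd e))
    | .bot => some (ctl .FwdBot)
    | _ => none := by
  intro a q
  simp only [hrRead, step_alt_iff, step_sumList_iff, step_pref_iff, mem_allOf, true_and]
  constructor
  · rintro (⟨e, rfl, rfl⟩ | ⟨rfl, rfl⟩) <;> exact ⟨_, rfl, rfl⟩
  · rintro ⟨_ | _ | _ | _ | _, rfl, ⟨⟩⟩ <;> simp

theorem isInputChoice_back : IsInputChoice EE co (ctl .Back) fun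
    | .dat e => some (.pref (some (.send ci (.dat e))) (ctl .Back))
    | .dollar => some (ctl (.H none))
    | _ => none := by
  intro a q
  simp only [step_ctl_iff, tapeCtrlSpec, Option.map_some, PExp.mapNames, mapNames_sumList,
    Option.some.injEq, exists_eq_left', step_alt_iff, step_sumList_iff, mem_allOf,
    step_pref_iff, true_and]
  constructor
  · rintro (⟨e, rfl, rfl⟩ | ⟨rfl, rfl⟩) <;> exact ⟨_, rfl, rfl⟩
  · rintro ⟨_ | _ | _ | _ | _, rfl, ⟨⟩⟩ <;> simp

theorem isInputChoice_fwd (h : Option D) : IsInputChoice EE co (ctl (.Fwd h)) fun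
    | .dat e => some (.pref (some (.send ci (.dat h))) (ctl (.Fwd e)))
    | .bot => some (.pref (some (.send ci (.dat h))) (ctl .FwdBot))
    | .dollar => some (ctl (.H h))
    | _ => none := by
  intro a q
  simp only [step_ctl_iff, tapeCtrlSpec, Option.map_some, PExp.mapNames, mapNames_sumList,
    Option.some.injEq, exists_eq_left', step_alt_iff, step_sumList_iff, mem_allOf,
    step_pref_iff, true_and]
  constructor
  · rintro ((⟨e, rfl, rfl⟩ | ⟨rfl, rfl⟩) | ⟨rfl, rfl⟩) <;> exact ⟨_, rfl, rfl⟩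
  · rintro ⟨_ | _ | _ | _ | _, rfl, ⟨⟩⟩ <;> simp

theorem isInputChoice_fwdBot : IsInputChoice EE co (ctl .FwdBot) fun
    | .dat e => some (.pref (some (.send ci .bot)) (ctl (.Fwd e)))
    | .dollar => some (.pref (some (.send ci .bot)) (ctl (.H none)))
    | _ => none := by
  intro a q
  simp only [step_ctl_iff, tapeCtrlSpec, Option.map_some, PExp.mapNames, mapNames_sumList,
    Option.some.injEq, exists_eq_left', step_alt_iff, step_sumList_iff, mem_allOf,
    step_pref_iff, true_and]
  constructor
  · rintro (⟨e, rfl, rfl⟩ | ⟨rfl, rfl⟩) <;> exact ⟨_, rfl, rfl⟩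
  · rintro ⟨_ | _ | _ | _ | _, rfl, ⟨⟩⟩ <;> simp

theorem hl_step (d : Option D) (l : List (Sym D)) :
    ⟪ctl (.HL d), l⟫ ⟶* ⟪hlRead ci co, .dat d :: l⟫ :=
  .single (uniqueTauStep_send (by simp [qAlphList]) fun _ _ => step_hl_iff)

theorem hlRead_dat (l : List (Sym D)) (e : Option D) :
    ⟪hlRead ci co, l ++ [.dat e]⟫ ⟶* ⟪ctl (.H e), l⟫ :=
  .single (uniqueTauStep_recv isInputChoice_hlRead rfl)

theorem hlRead_bot (l : List (Sym D)) :
    ⟪hlRead ci co, l ++ [.bot]⟫ ⟶* ⟪ctl .Back, .bot :: .dollar :: l⟫ :=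
  .head (uniqueTauStep_recv isInputChoice_hlRead rfl) <|
    .head (uniqueTauStep_send_pref (by simp [qAlphList])) <|
      .single (uniqueTauStep_send_pref (by simp [qAlphList]))

theorem back_dat (l : List (Sym D)) (e : Option D) :
    ⟪ctl .Back, l ++ [.dat e]⟫ ⟶* ⟪ctl .Back, .dat e :: l⟫ :=
  .head (uniqueTauStep_recv isInputChoice_back rfl) <|
    .single (uniqueTauStep_send_pref (by simp [qAlphList]))

theorem back_dollar (l : List (Sym D)) :
    ⟪ctl .Back, l ++ [.dollar]⟫ ⟶* ⟪ctl (.H none), l⟫ :=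
  .single (uniqueTauStep_recv isInputChoice_back rfl)

theorem hr_step (d : Option D) (l : List (Sym D)) :
    ⟪ctl (.HR d), l⟫ ⟶* ⟪hrRead co, .dat d :: .dollar :: l⟫ :=
  .head (uniqueTauStep_send (by simp [qAlphList]) fun _ _ => step_hr_iff) <|
    .single (uniqueTauStep_send_pref (by simp [qAlphList]))

theorem hrRead_dat (l : List (Sym D)) (e : Option D) :
    ⟪hrRead co, l ++ [.dat e]⟫ ⟶* ⟪ctl (.Fwd e), l⟫ :=
  .single (uniqueTauStep_recv isInputChoice_hrRead rfl)

theorem hrRead_bot (l : List (Sym D)) :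
    ⟪hrRead co, l ++ [.bot]⟫ ⟶* ⟪ctl .FwdBot, l⟫ :=
  .single (uniqueTauStep_recv isInputChoice_hrRead rfl)

theorem fwd_dat (l : List (Sym D)) (h e : Option D) :
    ⟪ctl (.Fwd h), l ++ [.dat e]⟫ ⟶* ⟪ctl (.Fwd e), .dat h :: l⟫ :=
  .head (uniqueTauStep_recv (isInputChoice_fwd h) rfl) <|
    .single (uniqueTauStep_send_pref (by simp [qAlphList]))

theorem fwd_bot (l : List (Sym D)) (h : Option D) :
    ⟪ctl (.Fwd h), l ++ [.bot]⟫ ⟶* ⟪ctl .FwdBot, .dat h :: l⟫ :=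
  .head (uniqueTauStep_recv (isInputChoice_fwd h) rfl) <|
    .single (uniqueTauStep_send_pref (by simp [qAlphList]))

theorem fwd_dollar (l : List (Sym D)) (h : Option D) :
    ⟪ctl (.Fwd h), l ++ [.dollar]⟫ ⟶* ⟪ctl (.H h), l⟫ :=
  .single (uniqueTauStep_recv (isInputChoice_fwd h) rfl)

theorem fwdBot_dat (l : List (Sym D)) (e : Option D) :
    ⟪ctl .FwdBot, l ++ [.dat e]⟫ ⟶* ⟪ctl (.Fwd e), .bot :: l⟫ :=
  .head (uniqueTauStep_recv isInputChoice_fwdBot rfl) <|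
    .single (uniqueTauStep_send_pref (by simp [qAlphList]))

theorem fwdBot_dollar (l : List (Sym D)) :
    ⟪ctl .FwdBot, l ++ [.dollar]⟫ ⟶* ⟪ctl (.H none), .bot :: l⟫ :=
  .head (uniqueTauStep_recv isInputChoice_fwdBot rfl) <|
    .single (uniqueTauStep_send_pref (by simp [qAlphList]))

theorem back_copy (w : List (Sym D)) (v : List (Option D)) :
    ⟪ctl .Back, w ++ dmap v⟫ ⟶* ⟪ctl .Back, dmap v ++ w⟫ := by
  induction v generalizing w with
  | nil => simpa [dmap] using .refl
  | cons y v ih =>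
    calc ⟪ctl .Back, w ++ dmap (y :: v)⟫
        _ ⟶* ⟪ctl .Back, dmap v ++ w ++ [.dat y]⟫ := by
          convert ih (w ++ [.dat y]) using 2 <;> simp [dmap]
        _ ⟶* ⟪ctl .Back, dmap (y :: v) ++ w⟫ := by
          convert back_dat (dmap v ++ w) y using 2; simp [dmap]

theorem fwd_rotate (w : List (Sym D)) (x y : Option D) (ρ : List (Option D)) :
    ⟪ctl (.Fwd x), w ++ dmap (y :: ρ)⟫ ⟶* ⟪ctl (.Fwd y), dmap (ρ ++ [x]) ++ w⟫ := by
  induction ρ using List.reverseRecOn generalizing x w with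
  | nil => exact fwd_dat w x y
  | append_singleton ρ z ih =>
    calc ⟪ctl (.Fwd x), w ++ dmap (y :: (ρ ++ [z]))⟫
        _ ⟶* ⟪ctl (.Fwd z), .dat x :: (w ++ dmap (y :: ρ))⟫ := by
          convert fwd_dat (w ++ dmap (y :: ρ)) x z using 2; simp [dmap]
        _ ⟶* ⟪ctl (.Fwd y), dmap (ρ ++ [z]) ++ .dat x :: w⟫ := ih (.dat x :: w) z
        _ = ⟪ctl (.Fwd y), dmap (ρ ++ [z] ++ [x]) ++ w⟫ := by simp [dmap]

theorem fwd_to_fwdBot (w : List (Sym D)) (x : Option D) (τ : List (Option D)) :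
    ⟪ctl (.Fwd x), w ++ .bot :: dmap τ⟫ ⟶* ⟪ctl .FwdBot, dmap (τ ++ [x]) ++ w⟫ := by
  cases τ with
  | nil => exact fwd_bot w x
  | cons y ρ =>
    calc ⟪ctl (.Fwd x), w ++ .bot :: dmap (y :: ρ)⟫
        _ ⟶* ⟪ctl (.Fwd y), dmap (ρ ++ [x]) ++ w ++ [.bot]⟫ := by
          convert fwd_rotate (w ++ [.bot]) x y ρ using 2 <;> simp [dmap]
        _ ⟶* ⟪ctl .FwdBot, dmap (y :: ρ ++ [x]) ++ w⟫ := by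
          convert fwd_bot (dmap (ρ ++ [x]) ++ w) y using 2; simp [dmap]

theorem fwd_to_h (w : List (Sym D)) (x y : Option D) (ρ : List (Option D)) :
    ⟪ctl (.Fwd x), w ++ .dollar :: dmap (y :: ρ)⟫ ⟶* ⟪ctl (.H y), dmap (ρ ++ [x]) ++ w⟫ := by
  calc ⟪ctl (.Fwd x), w ++ .dollar :: dmap (y :: ρ)⟫
      _ ⟶* ⟪ctl (.Fwd y), dmap (ρ ++ [x]) ++ w ++ [.dollar]⟫ := by
        convert fwd_rotate (w ++ [.dollar]) x y ρ using 2 <;> simp [dmap]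
      _ ⟶* ⟪ctl (.H y), dmap (ρ ++ [x]) ++ w⟫ := fwd_dollar _ y

theorem hrRead_to_fwdBot (w : List (Sym D)) (δ : List (Option D)) :
    ⟪hrRead co, w ++ .bot :: dmap δ⟫ ⟶* ⟪ctl .FwdBot, dmap δ ++ w⟫ := by
  rcases List.eq_nil_or_concat' δ with rfl | ⟨τ, x, rfl⟩
  · exact hrRead_bot w
  · calc ⟪hrRead co, w ++ .bot :: dmap (τ ++ [x])⟫
        _ ⟶* ⟪ctl (.Fwd x), w ++ .bot :: dmap τ⟫ := by
          convert hrRead_dat (w ++ .bot :: dmap τ) x using 2; simp [dmap]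
        _ ⟶* ⟪ctl .FwdBot, dmap (τ ++ [x]) ++ w⟫ := fwd_to_fwdBot w x τ

theorem fwdBot_to_h (w : List (Sym D)) (y : Option D) (ρ : List (Option D)) :
    ⟪ctl .FwdBot, w ++ .dollar :: dmap (y :: ρ)⟫ ⟶* ⟪ctl (.H y), dmap ρ ++ .bot :: w⟫ := by
  rcases List.eq_nil_or_concat' ρ with rfl | ⟨ρ, z, rfl⟩
  · calc ⟪ctl .FwdBot, w ++ .dollar :: dmap [y]⟫
        _ ⟶* ⟪ctl (.Fwd y), .bot :: (w ++ [.dollar])⟫ := by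
          convert fwdBot_dat (w ++ [.dollar]) y using 2; simp [dmap]
        _ ⟶* ⟪ctl (.H y), dmap [] ++ .bot :: w⟫ := fwd_dollar (.bot :: w) y
  · calc ⟪ctl .FwdBot, w ++ .dollar :: dmap (y :: (ρ ++ [z]))⟫
        _ ⟶* ⟪ctl (.Fwd z), .bot :: (w ++ .dollar :: dmap (y :: ρ))⟫ := by
          convert fwdBot_dat (w ++ .dollar :: dmap (y :: ρ)) z using 2; simp [dmap]
        _ ⟶* ⟪ctl (.H y), dmap (ρ ++ [z]) ++ .bot :: w⟫ := fwd_to_h (.bot :: w) z y ρ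

theorem move_left (d dL : Option D) (δR ζL : List (Option D)) :
    ⟪ctl (.HL d), dmap δR ++ [.bot] ++ dmap (ζL ++ [dL])⟫ ⟶*
      ⟪ctl (.H dL), .dat d :: (dmap δR ++ [.bot] ++ dmap ζL)⟫ := by
  calc ⟪ctl (.HL d), dmap δR ++ [.bot] ++ dmap (ζL ++ [dL])⟫
      _ ⟶* ⟪hlRead ci co, .dat d :: (dmap δR ++ [.bot] ++ dmap ζL) ++ [.dat dL]⟫ := by
        convert hl_step d _ using 2; simp [dmap]
      _ ⟶* ⟪ctl (.H dL), .dat d :: (dmap δR ++ [.bot] ++ dmap ζL)⟫ := hlRead_dat _ dL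

theorem move_left_nil (d : Option D) (δR : List (Option D)) :
    ⟪ctl (.HL d), dmap δR ++ [.bot] ++ dmap []⟫ ⟶*
      ⟪ctl (.H none), .dat d :: (dmap δR ++ [.bot])⟫ := by
  calc ⟪ctl (.HL d), dmap δR ++ [.bot] ++ dmap []⟫
      _ ⟶* ⟪hlRead ci co, .dat d :: dmap δR ++ [.bot]⟫ := by
        convert hl_step d _ using 2; simp [dmap]
      _ ⟶* ⟪ctl .Back, [.bot, .dollar] ++ dmap (d :: δR)⟫ := hlRead_bot _
      _ ⟶* ⟪ctl .Back, dmap (d :: δR) ++ [.bot] ++ [.dollar]⟫ := by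
        convert back_copy _ _ using 2; simp
      _ ⟶* ⟪ctl (.H none), .dat d :: (dmap δR ++ [.bot])⟫ := by
        convert back_dollar _ using 2; simp [dmap]

theorem move_right (d dR : Option D) (ζR δL : List (Option D)) :
    ⟪ctl (.HR d), dmap (dR :: ζR) ++ [.bot] ++ dmap δL⟫ ⟶*
      ⟪ctl (.H dR), dmap ζR ++ [.bot] ++ dmap δL ++ [.dat d]⟫ := by
  calc ⟪ctl (.HR d), dmap (dR :: ζR) ++ [.bot] ++ dmap δL⟫
      _ ⟶* ⟪hrRead co, [.dat d, .dollar] ++ dmap (dR :: ζR) ++ .bot :: dmap δL⟫ := by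
        convert hr_step d _ using 2; simp
      _ ⟶* ⟪ctl .FwdBot, dmap δL ++ [.dat d] ++ .dollar :: dmap (dR :: ζR)⟫ := by
        convert hrRead_to_fwdBot _ δL using 2; simp
      _ ⟶* ⟪ctl (.H dR), dmap ζR ++ [.bot] ++ dmap δL ++ [.dat d]⟫ := by
        convert fwdBot_to_h _ dR ζR using 2; simp

theorem move_right_nil (d : Option D) (δL : List (Option D)) :
    ⟪ctl (.HR d), dmap [] ++ [.bot] ++ dmap δL⟫ ⟶*
      ⟪ctl (.H none), [.bot] ++ dmap δL ++ [.dat d]⟫ := by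
  calc ⟪ctl (.HR d), dmap [] ++ [.bot] ++ dmap δL⟫
      _ ⟶* ⟪hrRead co, [.dat d, .dollar] ++ .bot :: dmap δL⟫ := by
        convert hr_step d _ using 2; simp [dmap]
      _ ⟶* ⟪ctl .FwdBot, dmap δL ++ [.dat d] ++ [.dollar]⟫ := by
        convert hrRead_to_fwdBot _ δL using 2; simp
      _ ⟶* ⟪ctl (.H none), [.bot] ++ dmap δL ++ [.dat d]⟫ := by
        convert fwdBot_dollar _ using 2; simp

end TapeController

theorem tape_controller_head_moves_general
    {C D B : Type} [Fintype D] [DecidableEq D] (ci co cr cw cm : C)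
    (d : Option D) (δL δR : List (Option D)) :
    (∀ (ζL : List (Option D)) (dL : Option D), δL = ζL ++ [dL] →
      DetInternalComp (Step (EdTQ C D B ci co cr cw cm))
        (.par {ci, co} (.name (.inl (.HL d)))
          (.name (.inr (dmap δR ++ [Sym.bot] ++ dmap δL))))
        (.par {ci, co} (.name (.inl (.H dL)))
          (.name (.inr (Sym.dat d :: (dmap δR ++ [Sym.bot] ++ dmap ζL)))))) ∧
    (δL = [] →
      DetInternalComp (Step (EdTQ C D B ci co cr cw cm))
        (.par {ci, co} (.name (.inl (.HL d)))
          (.name (.inr (dmap δR ++ [Sym.bot] ++ dmap δL))))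
        (.par {ci, co} (.name (.inl (.H (none : Option D))))
          (.name (.inr (Sym.dat d :: (dmap δR ++ [Sym.bot])))))) ∧
    (∀ (dR : Option D) (ζR : List (Option D)), δR = dR :: ζR →
      DetInternalComp (Step (EdTQ C D B ci co cr cw cm))
        (.par {ci, co} (.name (.inl (.HR d)))
          (.name (.inr (dmap δR ++ [Sym.bot] ++ dmap δL))))
        (.par {ci, co} (.name (.inl (.H dR)))
          (.name (.inr (dmap ζR ++ [Sym.bot] ++ dmap δL ++ [Sym.dat d]))))) ∧
    (δR = [] →
      DetInternalComp (Step (EdTQ C D B ci co cr cw cm))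
        (.par {ci, co} (.name (.inl (.HR d)))
          (.name (.inr (dmap δR ++ [Sym.bot] ++ dmap δL))))
        (.par {ci, co} (.name (.inl (.H (none : Option D))))
          (.name (.inr ([Sym.bot] ++ dmap δL ++ [Sym.dat d]))))) := by
  refine ⟨?_, ?_, ?_, ?_⟩
  · rintro ζL dL rfl
    exact .of_reflTransGen (move_left d dL δR ζL)
  · rintro rfl
    exact .of_reflTransGen (move_left_nil d δR)
  · rintro dR ζR rfl
    exact .of_reflTransGen (move_right d dR ζR δL)
  · rintro rfl
    exact .of_reflTransGen (move_right_nil d δL)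

/-- The head-movement phases of the tape controller give rise
to deterministic internal computations in the LTS of the specification
`ET ∪ E∞Q`. -/
theorem tape_controller_head_moves
    {C D B : Type} [Fintype D] [DecidableEq D] (ci co cr cw cm : C)
    (hdist : List.Pairwise (· ≠ ·) [ci, co, cr, cw, cm])
    (d : Option D) (δL δR : List (Option D)) :
    (∀ (ζL : List (Option D)) (dL : Option D), δL = ζL ++ [dL] →
      DetInternalComp (Step (EdTQ C D B ci co cr cw cm))
        (.par {ci, co} (.name (.inl (.HL d)))
          (.name (.inr (dmap δR ++ [Sym.bot] ++ dmap δL))))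
        (.par {ci, co} (.name (.inl (.H dL)))
          (.name (.inr (Sym.dat d :: (dmap δR ++ [Sym.bot] ++ dmap ζL)))))) ∧
    (δL = [] →
      DetInternalComp (Step (EdTQ C D B ci co cr cw cm))
        (.par {ci, co} (.name (.inl (.HL d)))
          (.name (.inr (dmap δR ++ [Sym.bot] ++ dmap δL))))
        (.par {ci, co} (.name (.inl (.H (none : Option D))))
          (.name (.inr (Sym.dat d :: (dmap δR ++ [Sym.bot])))))) ∧
    (∀ (dR : Option D) (ζR : List (Option D)), δR = dR :: ζR →
      DetInternalComp (Step (EdTQ C D B ci co cr cw cm))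
        (.par {ci, co} (.name (.inl (.HR d)))
          (.name (.inr (dmap δR ++ [Sym.bot] ++ dmap δL))))
        (.par {ci, co} (.name (.inl (.H dR)))
          (.name (.inr (dmap ζR ++ [Sym.bot] ++ dmap δL ++ [Sym.dat d]))))) ∧
    (δR = [] →
      DetInternalComp (Step (EdTQ C D B ci co cr cw cm))
        (.par {ci, co} (.name (.inl (.HR d)))
          (.name (.inr (dmap δR ++ [Sym.bot] ++ dmap δL))))
        (.par {ci, co} (.name (.inl (.H (none : Option D))))
          (.name (.inr ([Sym.bot] ++ dmap δL ++ [Sym.dat d]))))) :=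
  tape_controller_head_moves_general ci co cr cw cm d δL δR

end RTMPaper
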